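/- arXiv:2411.17218 — 2 statements merged into one kernel-verified Lean document; each statement's English description precedes it below -/
import Mathlib

section
/- Suppose ⟨ε, f − f_j⟩ = 0 for every j ∈ {1,…,N}. Then the difference of the row-normalized message-passing outputs satisfies the exact identity y^ano − y^ref = ((1 + S) • ε + (1 − t) • (S • f − g)) / ((1 + t·S)(1 + S)), and consequently ‖y^ano − y^ref‖² = ‖ε‖²/(1 + t·S)² + (1 − t)²·‖S • f − g‖² / ((1 + t·S)²(1 + S)²). -/
open Real
open scoped RealInnerProductSpace

/-- Under the orthogonality assumption, the difference of the
row-normalized message-passing outputs satisfies the exact identity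
`y^ano − y^ref = ((1 + S) • ε + (1 − t) • (S • f − g)) / ((1 + t·S)(1 + S))`,
and consequently
`‖y^ano − y^ref‖² = ‖ε‖²/(1 + t·S)² + (1 − t)²·‖S • f − g‖²/((1 + t·S)²(1 + S)²)`. -/
theorem message_passing_difference_identity
    {E : Type*} [NormedAddCommGroup E] [InnerProductSpace ℝ E]
    {N : ℕ} (f ε : E) (fj : Fin N → E) (δ : ℝ) (hδ : 0 < δ)
    (a : Fin N → ℝ) (ha : ∀ j, a j = Real.exp (-‖f - fj j‖ ^ 2 / δ))
    (t : ℝ) (ht : t = Real.exp (-‖ε‖ ^ 2 / δ))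
    (S : ℝ) (hS : S = ∑ j, a j)
    (g : E) (hg : g = ∑ j, a j • fj j)
    (yref yano : E)
    (hyref : yref = (1 + S)⁻¹ • (f + g))
    (hyano : yano = (1 + t * S)⁻¹ • ((f + ε) + t • g))
    (horth : ∀ j, ⟪ε, f - fj j⟫ = 0) :
    yano - yref =
      (((1 + t * S) * (1 + S))⁻¹) • ((1 + S) • ε + (1 - t) • (S • f - g)) ∧
    ‖yano - yref‖ ^ 2 =
      ‖ε‖ ^ 2 / (1 + t * S) ^ 2 +
        (1 - t) ^ 2 * ‖S • f - g‖ ^ 2 / ((1 + t * S) ^ 2 * (1 + S) ^ 2) := by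
  have hSnn : 0 ≤ S := by
    rw [hS]; exact Finset.sum_nonneg fun j _ => by rw [ha j]; positivity
  have htpos : 0 < t := by rw [ht]; positivity
  have hA : (0:ℝ) < 1 + S := by linarith
  have hB : (0:ℝ) < 1 + t * S := by nlinarith
  have hA' : (1 + S) ≠ 0 := ne_of_gt hA
  have hB' : (1 + t * S) ≠ 0 := ne_of_gt hB
  have h1 : ((1 + t * S) * (1 + S))⁻¹ * (1 + S) = (1 + t * S)⁻¹ := by
    field_simp
  have h2 : ((1 + t * S) * (1 + S))⁻¹ * (1 + t * S) = (1 + S)⁻¹ := by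
    field_simp
  have key : yano - yref =
      (((1 + t * S) * (1 + S))⁻¹) • ((1 + S) • ε + (1 - t) • (S • f - g)) := by
    rw [hyano, hyref]
    have vkey : (1 + S) • ((f + ε) + t • g) - (1 + t * S) • (f + g) =
        (1 + S) • ε + (1 - t) • (S • f - g) := by module
    rw [← vkey, smul_sub, smul_smul, smul_smul, h1, h2]
  refine ⟨key, ?_⟩
  have horth2 : ⟪ε, S • f - g⟫ = 0 := by
    have : S • f - g = ∑ j, a j • (f - fj j) := by
      simp [hS, hg, smul_sub, Finset.sum_smul, Finset.sum_sub_distrib]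
    rw [this, inner_sum]
    refine Finset.sum_eq_zero fun j _ => ?_
    rw [real_inner_smul_right, horth j, mul_zero]
  have horth3 : ⟪(1 + S) • ε, (1 - t) • (S • f - g)⟫ = 0 := by
    rw [real_inner_smul_left, real_inner_smul_right, horth2]; ring
  have hnorm : ‖(1 + S) • ε + (1 - t) • (S • f - g)‖ ^ 2 =
      (1 + S) ^ 2 * ‖ε‖ ^ 2 + (1 - t) ^ 2 * ‖S • f - g‖ ^ 2 := by
    rw [norm_add_sq_real, horth3, norm_smul, norm_smul]
    simp [mul_pow, sq_abs]
  rw [key, norm_smul, mul_pow, hnorm, Real.norm_eq_abs, sq_abs]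
  field_simp
end

section
/- Suppose ⟨ε, f − f_j⟩ = 0 for every j ∈ {1,…,N}. Then the discrepancy between the message-passed anomalous and reference features is bounded below: ‖y^ano − y^ref‖ ≥ ‖ε‖/(1 + t·S) ≥ ‖ε‖/(1 + S) ≥ ‖ε‖/(1 + N), where the last inequality holds because each Gaussian-kernel weight satisfies 0 < a_j ≤ 1, hence S ≤ N. Moreover, if ε ≠ 0 and S > 0 then the middle inequality is strict: ‖y^ano − y^ref‖ > ‖ε‖/(1 + S). -/
open Real
open scoped RealInnerProductSpace

/-- Under the orthogonality assumption, the discrepancy between the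
message-passed anomalous and reference features is bounded below:
`‖y^ano − y^ref‖ ≥ ‖ε‖/(1 + t·S) ≥ ‖ε‖/(1 + S) ≥ ‖ε‖/(1 + N)`, and moreover if
`ε ≠ 0` and `S > 0` then `‖y^ano − y^ref‖ > ‖ε‖/(1 + S)`. -/
theorem message_passing_discrepancy_lower_bound
    {E : Type*} [NormedAddCommGroup E] [InnerProductSpace ℝ E]
    {N : ℕ} (f ε : E) (fj : Fin N → E) (δ : ℝ) (hδ : 0 < δ)
    (a : Fin N → ℝ) (ha : ∀ j, a j = Real.exp (-‖f - fj j‖ ^ 2 / δ))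
    (t : ℝ) (ht : t = Real.exp (-‖ε‖ ^ 2 / δ))
    (S : ℝ) (hS : S = ∑ j, a j)
    (g : E) (hg : g = ∑ j, a j • fj j)
    (yref yano : E)
    (hyref : yref = (1 + S)⁻¹ • (f + g))
    (hyano : yano = (1 + t * S)⁻¹ • ((f + ε) + t • g))
    (horth : ∀ j, ⟪ε, f - fj j⟫ = 0) :
    ‖yano - yref‖ ≥ ‖ε‖ / (1 + t * S) ∧
    ‖ε‖ / (1 + t * S) ≥ ‖ε‖ / (1 + S) ∧
    ‖ε‖ / (1 + S) ≥ ‖ε‖ / (1 + (N : ℝ)) ∧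
    (ε ≠ 0 → 0 < S → ‖yano - yref‖ > ‖ε‖ / (1 + S)) := by
  have htpos : 0 < t := by rw [ht]; exact Real.exp_pos _
  have ht1 : t ≤ 1 := by
    rw [ht]; apply Real.exp_le_one_iff.mpr
    apply div_nonpos_of_nonpos_of_nonneg <;> [skip; exact hδ.le]
    simp [sq_nonneg]
  have hapos : ∀ j, 0 < a j := fun j => by rw [ha j]; exact Real.exp_pos _
  have ha1 : ∀ j, a j ≤ 1 := fun j => by
    rw [ha j]; apply Real.exp_le_one_iff.mpr
    apply div_nonpos_of_nonpos_of_nonneg <;> [skip; exact hδ.le]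
    simp [sq_nonneg]
  have hSnn : 0 ≤ S := by
    rw [hS]; exact Finset.sum_nonneg fun j _ => (hapos j).le
  have hSN : S ≤ N := by
    rw [hS]
    calc ∑ j, a j ≤ ∑ _j : Fin N, (1:ℝ) := Finset.sum_le_sum fun j _ => ha1 j
    _ = N := by simp
  have htS : 0 ≤ t * S := mul_nonneg htpos.le hSnn
  have hd1 : (0:ℝ) < 1 + t * S := by linarith
  have hd2 : (0:ℝ) < 1 + S := by linarith
  have htSS : t * S ≤ S := by nlinarith
  have hεg : ⟪ε, g⟫ = S * ⟪ε, f⟫ := by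
    have hj : ∀ j, ⟪ε, fj j⟫ = ⟪ε, f⟫ := fun j => by
      have := horth j; rw [inner_sub_right] at this; linarith
    rw [hg, inner_sum]
    simp only [real_inner_smul_right, hj]
    rw [← Finset.sum_mul, hS]
  have hkey : ⟪ε, yano - yref⟫ = (1 + t * S)⁻¹ * ‖ε‖ ^ 2 := by
    rw [hyano, hyref, inner_sub_right, real_inner_smul_right, real_inner_smul_right,
      inner_add_right, inner_add_right, inner_add_right, real_inner_smul_right,
      hεg, real_inner_self_eq_norm_sq]
    field_simp
    ring
  have hCS : ‖ε‖ / (1 + t * S) ≤ ‖yano - yref‖ := by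
    rcases eq_or_ne ε 0 with h0 | h0
    · simp [h0, norm_nonneg]
    · have hεn : 0 < ‖ε‖ := norm_pos_iff.mpr h0
      have := real_inner_le_norm ε (yano - yref)
      rw [hkey] at this
      rw [div_le_iff₀ hd1]
      have h2 : ‖ε‖ ^ 2 ≤ ‖ε‖ * ‖yano - yref‖ * (1 + t * S) := by
        have h3 := mul_le_mul_of_nonneg_right this hd1.le
        rwa [inv_mul_eq_div, div_mul_cancel₀ _ hd1.ne'] at h3
      nlinarith
  refine ⟨hCS, ?_, ?_, ?_⟩
  · exact div_le_div_of_nonneg_left (norm_nonneg ε) hd1 (by linarith)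
  · apply div_le_div_of_nonneg_left (norm_nonneg ε) (by positivity) (by linarith)
  · intro h0 hSpos
    have hεn : 0 < ‖ε‖ := norm_pos_iff.mpr h0
    have htlt : t < 1 := by
      rw [ht]; apply Real.exp_lt_one_iff.mpr
      apply div_neg_of_neg_of_pos _ hδ
      simp only [neg_neg, Left.neg_neg_iff]; positivity
    have : ‖ε‖ / (1 + S) < ‖ε‖ / (1 + t * S) := by
      apply div_lt_div_of_pos_left hεn hd1; nlinarith
    linarith
end
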